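/- Fix r, s ∈ ℂ and define, for smooth f : ℝ² → ℂ (coordinates (t,x)): h f = −x ∂_x f − 2t ∂_t f + r f, e⁺ f = −∂_t f, e⁻ f = t x ∂_x f + t² ∂_t f − (s x² + r t) f, and Ω f = (1/2) h(h f) − h f + 2 e⁺(e⁻ f). Then for every smooth f and all (t,x) ∈ ℝ²: (Ω f)(t,x) = (1/2)( 4s x² ∂_t f(t,x) + x² ∂_x² f(t,x) − (1 + 2r) x ∂_x f(t,x) + r(r+2) f(t,x) ). -/

import Mathlib

/-- Partial derivative in the first (time) variable. -/
noncomputable def pderivT (f : ℝ → ℝ → ℂ) (t x : ℝ) : ℂ := deriv (fun t' => f t' x) t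

/-- Partial derivative in the second (space) variable. -/
noncomputable def pderivX (f : ℝ → ℝ → ℂ) (t x : ℝ) : ℂ := deriv (fun x' => f t x') x

/-- Second partial derivative in the space variable. -/
noncomputable def pderivXX (f : ℝ → ℝ → ℂ) (t x : ℝ) : ℂ :=
  deriv (deriv (fun x' => f t x')) x

/-- `h f = -x ∂_x f - 2t ∂_t f + r f`. -/
noncomputable def Hop (r : ℂ) (f : ℝ → ℝ → ℂ) (t x : ℝ) : ℂ :=
  -(x : ℂ) * pderivX f t x - 2 * (t : ℂ) * pderivT f t x + r * f t x

/-- `e⁺ f = -∂_t f`. -/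
noncomputable def Eplus (f : ℝ → ℝ → ℂ) (t x : ℝ) : ℂ := -pderivT f t x

/-- `e⁻ f = t x ∂_x f + t² ∂_t f - (s x² + r t) f`. -/
noncomputable def Eminus (r s : ℂ) (f : ℝ → ℝ → ℂ) (t x : ℝ) : ℂ :=
  (t : ℂ) * (x : ℂ) * pderivX f t x + (t : ℂ) ^ 2 * pderivT f t x
    - (s * (x : ℂ) ^ 2 + r * (t : ℂ)) * f t x

/-- `Ω f = (1/2) h(h f) - h f + 2 e⁺(e⁻ f)`. -/
noncomputable def OmegaNC (r s : ℂ) (f : ℝ → ℝ → ℂ) (t x : ℝ) : ℂ :=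
  (1/2 : ℂ) * Hop r (fun t' x' => Hop r f t' x') t x - Hop r f t x
    + 2 * Eplus (fun t' x' => Eminus r s f t' x') t x

/-- The Casimir `Ω = (1/2)h² - h + 2e⁺e⁻` acts on the noncompact picture by
`(1/2)(4s x² ∂_t + x² ∂_x² - (1+2r) x ∂_x + r(r+2))`. -/
theorem casimir_noncompact_picture (r s : ℂ)
    (f : ℝ → ℝ → ℂ) (hf : ContDiff ℝ (⊤ : ℕ∞) (fun p : ℝ × ℝ => f p.1 p.2)) :
    ∀ t x : ℝ, OmegaNC r s f t x
      = (1/2 : ℂ) * (4 * s * (x : ℂ) ^ 2 * pderivT f t x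
          + (x : ℂ) ^ 2 * pderivXX f t x
          - (1 + 2 * r) * (x : ℂ) * pderivX f t x
          + r * (r + 2) * f t x) := by
  intro t x
  have comp_fst : ∀ (G : ℝ × ℝ → ℂ) (t x : ℝ), DifferentiableAt ℝ G (t, x) →
      HasDerivAt (fun t' => G (t', x)) (fderiv ℝ G (t, x) (1, 0)) t := fun G t x hG =>
    hG.hasFDerivAt.comp_hasDerivAt t ((hasDerivAt_id t).prodMk (hasDerivAt_const t x))
  have comp_snd : ∀ (G : ℝ × ℝ → ℂ) (t x : ℝ), DifferentiableAt ℝ G (t, x) →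
      HasDerivAt (fun x' => G (t, x')) (fderiv ℝ G (t, x) (0, 1)) x := fun G t x hG =>
    hG.hasFDerivAt.comp_hasDerivAt x ((hasDerivAt_const x t).prodMk (hasDerivAt_id x))
  have hR : ∀ y : ℝ, HasDerivAt (fun y' : ℝ => (y' : ℂ)) 1 y := fun y => by
    simpa using (hasDerivAt_id y).ofReal_comp
  set F : ℝ × ℝ → ℂ := fun p => f p.1 p.2 with hFdef
  have hFs : ContDiff ℝ (⊤ : ℕ∞) F := hf
  have hFd : Differentiable ℝ F := hFs.differentiable (by simp)
  have hDF : ContDiff ℝ (⊤ : ℕ∞) (fderiv ℝ F) := hFs.fderiv_right (by simp)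
  set a : ℝ × ℝ → ℂ := fun p => fderiv ℝ F p (1, 0) with hadef
  set b : ℝ × ℝ → ℂ := fun p => fderiv ℝ F p (0, 1) with hbdef
  have haD : Differentiable ℝ a := (hDF.clm_apply contDiff_const).differentiable (by simp)
  have hbD : Differentiable ℝ b := (hDF.clm_apply contDiff_const).differentiable (by simp)
  have ea : ∀ t' x' : ℝ, pderivT f t' x' = a (t', x') := fun t' x' =>
    (comp_fst F t' x' (hFd _)).deriv
  have eb : ∀ t' x' : ℝ, pderivX f t' x' = b (t', x') := fun t' x' =>
    (comp_snd F t' x' (hFd _)).deriv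
  have hax : HasDerivAt (fun x' => a (t, x')) (fderiv ℝ a (t, x) (0, 1)) x :=
    comp_snd a t x (haD _)
  have hat : HasDerivAt (fun t' => a (t', x)) (fderiv ℝ a (t, x) (1, 0)) t :=
    comp_fst a t x (haD _)
  have hbx : HasDerivAt (fun x' => b (t, x')) (fderiv ℝ b (t, x) (0, 1)) x :=
    comp_snd b t x (hbD _)
  have hbt : HasDerivAt (fun t' => b (t', x)) (fderiv ℝ b (t, x) (1, 0)) t :=
    comp_fst b t x (hbD _)
  have hfx : HasDerivAt (fun x' => F (t, x')) (b (t, x)) x := comp_snd F t x (hFd _)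
  have hft : HasDerivAt (fun t' => F (t', x)) (a (t, x)) t := comp_fst F t x (hFd _)
  have exx : pderivXX f t x = fderiv ℝ b (t, x) (0, 1) := by
    have h1 : deriv (fun x' => f t x') = fun x' => b (t, x') := by
      funext x'
      exact (comp_snd F t x' (hFd _)).deriv
    show deriv (deriv (fun x' => f t x')) x = _
    rw [h1]
    exact (comp_snd b t x (hbD _)).deriv
  have hHop : ∀ t' x' : ℝ, Hop r f t' x'
      = -(x' : ℂ) * b (t', x') - 2 * (t' : ℂ) * a (t', x') + r * F (t', x') := by
    intro t' x'
    simp only [Hop, ea, eb]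
    rfl
  have hEm : ∀ t' x' : ℝ, Eminus r s f t' x'
      = (t' : ℂ) * (x' : ℂ) * b (t', x') + (t' : ℂ) ^ 2 * a (t', x')
        - (s * (x' : ℂ) ^ 2 + r * (t' : ℂ)) * F (t', x') := by
    intro t' x'
    simp only [Eminus, ea, eb]
    rfl
  have hHX : pderivX (fun t' x' => Hop r f t' x') t x
      = -b (t, x) - (x : ℂ) * fderiv ℝ b (t, x) (0, 1)
        - 2 * (t : ℂ) * fderiv ℝ a (t, x) (0, 1) + r * b (t, x) := by
    have h1 : (fun x' => Hop r f t x')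
        = fun x' : ℝ => -(x' : ℂ) * b (t, x') - 2 * (t : ℂ) * a (t, x') + r * F (t, x') :=
      funext fun x' => hHop t x'
    show deriv (fun x' => Hop r f t x') x = _
    rw [h1]
    exact ((((hR x).neg.mul hbx).sub (hax.const_mul (2 * (t : ℂ)))).add
      (hfx.const_mul r)).deriv.trans (by simp only [Pi.neg_apply]; ring)
  have hHT : pderivT (fun t' x' => Hop r f t' x') t x
      = -(x : ℂ) * fderiv ℝ b (t, x) (1, 0) - 2 * a (t, x)
        - 2 * (t : ℂ) * fderiv ℝ a (t, x) (1, 0) + r * a (t, x) := by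
    have h1 : (fun t' => Hop r f t' x)
        = fun t' : ℝ => -(x : ℂ) * b (t', x) - 2 * (t' : ℂ) * a (t', x) + r * F (t', x) :=
      funext fun t' => hHop t' x
    show deriv (fun t' => Hop r f t' x) t = _
    rw [h1]
    exact (((hbt.const_mul (-(x : ℂ))).sub (((hR t).const_mul 2).mul hat)).add
      (hft.const_mul r)).deriv.trans (by ring)
  have hET : pderivT (fun t' x' => Eminus r s f t' x') t x
      = (x : ℂ) * b (t, x) + (t : ℂ) * (x : ℂ) * fderiv ℝ b (t, x) (1, 0)
        + 2 * (t : ℂ) * a (t, x) + (t : ℂ) ^ 2 * fderiv ℝ a (t, x) (1, 0)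
        - r * F (t, x) - (s * (x : ℂ) ^ 2 + r * (t : ℂ)) * a (t, x) := by
    have h1 : (fun t' => Eminus r s f t' x)
        = fun t' : ℝ => (t' : ℂ) * (x : ℂ) * b (t', x) + (t' : ℂ) ^ 2 * a (t', x)
            - (s * (x : ℂ) ^ 2 + r * (t' : ℂ)) * F (t', x) :=
      funext fun t' => hEm t' x
    show deriv (fun t' => Eminus r s f t' x) t = _
    rw [h1]
    have k1 : HasDerivAt (fun t' : ℝ => (t' : ℂ) ^ 2) (2 * (t : ℂ)) t := by
      have h : HasDerivAt (fun t' : ℝ => (t' : ℂ) * (t' : ℂ)) (1 * (t : ℂ) + (t : ℂ) * 1) t :=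
        (hR t).mul (hR t)
      have e : (fun t' : ℝ => (t' : ℂ) ^ 2) = fun t' : ℝ => (t' : ℂ) * (t' : ℂ) := by
        funext y; ring
      rw [e]
      convert h using 1
      ring
    have k2 : HasDerivAt (fun t' : ℝ => (t' : ℂ) * (x : ℂ)) ((x : ℂ)) t := by
      simpa using (hR t).mul_const (x : ℂ)
    have k3 : HasDerivAt (fun t' : ℝ => s * (x : ℂ) ^ 2 + r * (t' : ℂ)) r t := by
      simpa using ((hR t).const_mul r).const_add (s * (x : ℂ) ^ 2)
    exact (((k2.mul hbt).add (k1.mul hat)).sub (k3.mul hft)).deriv.trans (by ring)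
  have hDFd : DifferentiableAt ℝ (fderiv ℝ F) (t, x) := (hDF.differentiable (by simp)) _
  have hsy : IsSymmSndFDerivAt ℝ F (t, x) := hFs.contDiffAt.isSymmSndFDerivAt (by simp; exact WithTop.coe_le_coe.mpr (le_top : (2:ℕ∞) ≤ ⊤))
  have h1 : fderiv ℝ a (t, x) = (fderiv ℝ (fderiv ℝ F) (t, x)).flip ((1 : ℝ), (0 : ℝ)) := by
    have := fderiv_clm_apply (𝕜 := ℝ) (c := fderiv ℝ F)
      (u := fun _ : ℝ × ℝ => ((1 : ℝ), (0 : ℝ))) hDFd (differentiableAt_const _)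
    simpa using this
  have h2 : fderiv ℝ b (t, x) = (fderiv ℝ (fderiv ℝ F) (t, x)).flip ((0 : ℝ), (1 : ℝ)) := by
    have := fderiv_clm_apply (𝕜 := ℝ) (c := fderiv ℝ F)
      (u := fun _ : ℝ × ℝ => ((0 : ℝ), (1 : ℝ))) hDFd (differentiableAt_const _)
    simpa using this
  have hsymm : fderiv ℝ a (t, x) (0, 1) = fderiv ℝ b (t, x) (1, 0) := by
    rw [h1, h2]
    simpa using hsy ((0 : ℝ), (1 : ℝ)) ((1 : ℝ), (0 : ℝ))
  have hOmega : OmegaNC r s f t x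
      = (1 / 2 : ℂ) * (-(x : ℂ) * pderivX (fun t' x' => Hop r f t' x') t x
          - 2 * (t : ℂ) * pderivT (fun t' x' => Hop r f t' x') t x
          + r * Hop r f t x)
        - Hop r f t x
        + 2 * -pderivT (fun t' x' => Eminus r s f t' x') t x := rfl
  rw [hOmega, hHX, hHT, hET, hHop t x, exx, ea, eb, hsymm,
    show f t x = F (t, x) from rfl]
  ring
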